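/- For n ≥ 1 and every integer i ≥ 0, the open book OB(Sⁿ×[0,1], σ_n^i) admits a spun embedding (open book embedding) in OB(S^{n+1}×[0,1], σ_{n+1}^i), induced by the equatorial embedding of Sⁿ in S^{n+1}. -/

import Mathlib

/-!  A topological framework for open books, spun embeddings and twist maps.

All manifolds are modelled as topological spaces (smooth structures are not
available in Mathlib, so "diffeomorphic" is rendered as "homeomorphic" and
diffeomorphism groups are rendered via homeomorphisms; orientations/spin
structures, which are likewise not available, are omitted).  -/

open Set Topology Metric Real unitInterval

noncomputable section
set_option maxHeartbeats 1000000

/-- The unit `n`-sphere `Sⁿ ⊆ ℝ^{n+1}`. -/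
abbrev Sph (n : ℕ) := {x : EuclideanSpace ℝ (Fin (n + 1)) // ‖x‖ = 1}

/-- The closed unit `n`-disk `Dⁿ ⊆ ℝⁿ`. -/
abbrev Dsk (n : ℕ) := {x : EuclideanSpace ℝ (Fin n) // ‖x‖ ≤ 1}

/-- The linear map of `ℝᵐ` acting on the coordinates `i, j` by the rotation-like matrix
`[[a, -b], [b, a]]` and fixing all other coordinates. -/
def rotIn {m : ℕ} (i j : Fin m) (a b : ℝ) (x : EuclideanSpace ℝ (Fin m)) :
    EuclideanSpace ℝ (Fin m) :=
  WithLp.toLp 2 fun k => if k = i then a * x i - b * x j else if k = j then b * x i + a * x j else x k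

lemma rotIn_apply_ne {m : ℕ} {i j k : Fin m} (a b : ℝ) (x : EuclideanSpace ℝ (Fin m))
    (hki : k ≠ i) (hkj : k ≠ j) : rotIn i j a b x k = x k := by
  simp [rotIn, hki, hkj]

lemma rotIn_apply_i {m : ℕ} {i j : Fin m} (a b : ℝ) (x : EuclideanSpace ℝ (Fin m)) :
    rotIn i j a b x i = a * x i - b * x j := by
  simp [rotIn]

lemma rotIn_apply_j {m : ℕ} {i j : Fin m} (hij : i ≠ j) (a b : ℝ)
    (x : EuclideanSpace ℝ (Fin m)) : rotIn i j a b x j = b * x i + a * x j := by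
  simp [rotIn, hij.symm]

lemma rotIn_norm {m : ℕ} {i j : Fin m} (hij : i ≠ j) {a b : ℝ} (hab : a ^ 2 + b ^ 2 = 1)
    (x : EuclideanSpace ℝ (Fin m)) : ‖rotIn i j a b x‖ = ‖x‖ := by
  rw [EuclideanSpace.norm_eq, EuclideanSpace.norm_eq]
  congr 1
  have hsub : ({i, j} : Finset (Fin m)) ⊆ Finset.univ := Finset.subset_univ _
  rw [← Finset.sum_sdiff hsub, ← Finset.sum_sdiff hsub]
  have h1 : ∀ y : EuclideanSpace ℝ (Fin m),
      ∑ k ∈ ({i, j} : Finset (Fin m)), ‖y k‖ ^ 2 = ‖y i‖ ^ 2 + ‖y j‖ ^ 2 := by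
    intro y; rw [Finset.sum_pair hij]
  rw [h1, h1]
  have h2 : ∑ k ∈ Finset.univ \ ({i, j} : Finset (Fin m)), ‖rotIn i j a b x k‖ ^ 2
      = ∑ k ∈ Finset.univ \ ({i, j} : Finset (Fin m)), ‖x k‖ ^ 2 := by
    apply Finset.sum_congr rfl
    intro k hk
    simp only [Finset.mem_sdiff, Finset.mem_insert, Finset.mem_singleton] at hk
    rw [rotIn_apply_ne _ _ _ (fun h => hk.2 (Or.inl h)) (fun h => hk.2 (Or.inr h))]
  rw [h2]
  congr 1
  rw [rotIn_apply_i, rotIn_apply_j hij]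
  simp only [Real.norm_eq_abs, sq_abs]
  linear_combination (x i ^ 2 + x j ^ 2) * hab

lemma rotIn_inv {m : ℕ} {i j : Fin m} (hij : i ≠ j) {a b : ℝ} (hab : a ^ 2 + b ^ 2 = 1)
    (x : EuclideanSpace ℝ (Fin m)) : rotIn i j a (-b) (rotIn i j a b x) = x := by
  refine PiLp.ext fun k => ?_
  by_cases hki : k = i
  · subst hki
    rw [rotIn_apply_i, rotIn_apply_i, rotIn_apply_j hij]
    linear_combination x k * hab
  · by_cases hkj : k = j
    · subst hkj
      rw [rotIn_apply_j hij, rotIn_apply_i, rotIn_apply_j hij]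
      linear_combination x k * hab
    · rw [rotIn_apply_ne _ _ _ hki hkj, rotIn_apply_ne _ _ _ hki hkj]

lemma rotIn_continuous {m : ℕ} (i j : Fin m) :
    Continuous (fun p : ℝ × ℝ × EuclideanSpace ℝ (Fin m) =>
      rotIn i j p.1 p.2.1 p.2.2) := by
  apply (PiLp.continuous_toLp 2 _).comp
  apply continuous_pi
  intro k
  show Continuous fun p : ℝ × ℝ × EuclideanSpace ℝ (Fin m) => rotIn i j p.1 p.2.1 p.2.2 k
  by_cases hki : k = i
  · subst hki
    have he : (fun p : ℝ × ℝ × EuclideanSpace ℝ (Fin m) => rotIn k j p.1 p.2.1 p.2.2 k)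
        = fun p => p.1 * p.2.2 k - p.2.1 * p.2.2 j := by
      funext p; rw [rotIn_apply_i]
    rw [he]
    have h1 : Continuous (fun p : ℝ × ℝ × EuclideanSpace ℝ (Fin m) => p.2.2 k) :=
      (continuous_apply k).comp ((PiLp.continuous_ofLp 2 _).comp (continuous_snd.comp continuous_snd))
    have h2 : Continuous (fun p : ℝ × ℝ × EuclideanSpace ℝ (Fin m) => p.2.2 j) :=
      (continuous_apply j).comp ((PiLp.continuous_ofLp 2 _).comp (continuous_snd.comp continuous_snd))
    exact (continuous_fst.mul h1).sub ((continuous_fst.comp continuous_snd).mul h2)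
  · by_cases hkj : k = j
    · subst hkj
      have he : (fun p : ℝ × ℝ × EuclideanSpace ℝ (Fin m) => rotIn i k p.1 p.2.1 p.2.2 k)
          = fun p => p.2.1 * p.2.2 i + p.1 * p.2.2 k := by
        funext p; rw [rotIn_apply_j (by exact fun h => hki h.symm)]
      rw [he]
      have h1 : Continuous (fun p : ℝ × ℝ × EuclideanSpace ℝ (Fin m) => p.2.2 i) :=
        (continuous_apply i).comp ((PiLp.continuous_ofLp 2 _).comp (continuous_snd.comp continuous_snd))
      have h2 : Continuous (fun p : ℝ × ℝ × EuclideanSpace ℝ (Fin m) => p.2.2 k) :=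
        (continuous_apply k).comp ((PiLp.continuous_ofLp 2 _).comp (continuous_snd.comp continuous_snd))
      exact ((continuous_fst.comp continuous_snd).mul h1).add (continuous_fst.mul h2)
    · have he : (fun p : ℝ × ℝ × EuclideanSpace ℝ (Fin m) => rotIn i j p.1 p.2.1 p.2.2 k)
          = fun p => p.2.2 k := by
        funext p; rw [rotIn_apply_ne _ _ _ hki hkj]
      rw [he]
      exact (continuous_apply k).comp ((PiLp.continuous_ofLp 2 _).comp (continuous_snd.comp continuous_snd))

/-- A continuous function `ℝ → [0,1]` which is `0` near `(-∞, 1/3]` and `1` on `[2/3, ∞)`,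
used to parametrize twist maps so that they are the identity near the boundary. -/
def bump (t : ℝ) : ℝ := min 1 (max 0 (3 * t - 1))

lemma bump_continuous : Continuous bump := by
  unfold bump; fun_prop

/-- The angle function of the model twist maps. -/
def twAng (t : I) : ℝ := 2 * π * bump t

lemma twAng_continuous : Continuous twAng :=
  (continuous_const.mul (bump_continuous.comp continuous_subtype_val))

lemma fin01_ne {n : ℕ} : (0 : Fin (n + 2)) ≠ 1 := by
  simp [Fin.ext_iff]

/-- The model sphere twist `σ_{n+1}` of `S^{n+1} × [0,1]`:
`(y, t) ↦ (α(t) · y, t)`, where `α : [0,1] → SO(n+2)` is the loop, based at the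
identity, of rotations in the first two coordinates by the angle `2π · bump t`;
this loop generates `π₁(SO(n+2))`.  (It is reparametrized by `bump` so that it is
the identity near the two boundary spheres.)  For `n + 1 = 1` this is the model
(right-handed) Dehn twist of the annulus `S¹ × [0,1]`. -/
def sphereTwistCore (n : ℕ) : (Sph (n + 1) × I) ≃ₜ (Sph (n + 1) × I) where
  toFun p := (⟨rotIn 0 1 (cos (twAng p.2)) (sin (twAng p.2)) p.1.1,
      by rw [rotIn_norm fin01_ne (cos_sq_add_sin_sq _)]; exact p.1.2⟩, p.2)
  invFun p := (⟨rotIn 0 1 (cos (twAng p.2)) (-sin (twAng p.2)) p.1.1,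
      by rw [rotIn_norm fin01_ne (by rw [neg_sq]; exact cos_sq_add_sin_sq _)]; exact p.1.2⟩, p.2)
  left_inv p := by
    refine Prod.ext ?_ rfl
    apply Subtype.ext
    exact rotIn_inv fin01_ne (cos_sq_add_sin_sq _) p.1.1
  right_inv p := by
    refine Prod.ext ?_ rfl
    apply Subtype.ext
    have := rotIn_inv (a := cos (twAng p.2)) (b := -sin (twAng p.2)) fin01_ne
      (by rw [neg_sq]; exact cos_sq_add_sin_sq _) p.1.1
    rwa [neg_neg] at this
  continuous_toFun := by
    apply Continuous.prodMk
    · apply Continuous.subtype_mk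
      have h3 : Continuous (fun p : Sph (n + 1) × I =>
          ((cos (twAng p.2), sin (twAng p.2), p.1.1) : ℝ × ℝ × EuclideanSpace ℝ (Fin (n + 2)))) := by
        refine Continuous.prodMk ?_ (Continuous.prodMk ?_ ?_)
        · exact (continuous_cos.comp (twAng_continuous.comp continuous_snd))
        · exact (continuous_sin.comp (twAng_continuous.comp continuous_snd))
        · exact continuous_subtype_val.comp continuous_fst
      exact (rotIn_continuous 0 1).comp h3
    · exact continuous_snd
  continuous_invFun := by
    apply Continuous.prodMk
    · apply Continuous.subtype_mk
      have h3 : Continuous (fun p : Sph (n + 1) × I =>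
          ((cos (twAng p.2), -sin (twAng p.2), p.1.1) : ℝ × ℝ × EuclideanSpace ℝ (Fin (n + 2)))) := by
        refine Continuous.prodMk ?_ (Continuous.prodMk ?_ ?_)
        · exact (continuous_cos.comp (twAng_continuous.comp continuous_snd))
        · exact (continuous_sin.comp (twAng_continuous.comp continuous_snd)).neg
        · exact continuous_subtype_val.comp continuous_fst
      exact (rotIn_continuous 0 1).comp h3
    · exact continuous_snd

/-- The model twist `σ_n` of `Sⁿ × [0,1]` (the identity in the degenerate case `n = 0`,
which is never used).  For `n = 1` this is the model Dehn twist of the annulus. -/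
def sphereTwist : (n : ℕ) → (Sph n × I) ≃ₜ (Sph n × I)
  | 0 => Homeomorph.refl _
  | (n + 1) => sphereTwistCore n

/-! ### Pages, open books, spun embeddings -/

/-- A *page*: a topological space together with a designated boundary subset. -/
structure Page : Type 1 where
  carrier : Type
  [top : TopologicalSpace carrier]
  bdry : Set carrier

attribute [instance] Page.top

/-- A self-homeomorphism of a page is the identity near the boundary. -/
def IdNearBdry (P : Page) (f : P.carrier ≃ₜ P.carrier) : Prop :=
  ∃ U : Set P.carrier, IsOpen U ∧ P.bdry ⊆ U ∧ EqOn f id U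

/-- Two self-homeomorphisms of a page are isotopic relative to the boundary. -/
def IsotopicRelBdry (P : Page) (f g : P.carrier ≃ₜ P.carrier) : Prop :=
  ∃ F : C(I × P.carrier, P.carrier),
    (∀ t, ∃ ht : P.carrier ≃ₜ P.carrier, ∀ x, F (t, x) = ht x) ∧
    (∀ x, F (0, x) = f x) ∧ (∀ x, F (1, x) = g x) ∧
    (∀ t, ∀ x ∈ P.bdry, F (t, x) = x)

/-- The mapping torus of a self-homeomorphism. -/
def MappingTorus {V : Type} [TopologicalSpace V] (h : V ≃ₜ V) : Type :=
  Quot fun p q : V × ℝ => q.2 = p.2 + 1 ∧ q.1 = h p.1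

instance {V : Type} [TopologicalSpace V] (h : V ≃ₜ V) : TopologicalSpace (MappingTorus h) :=
  instTopologicalSpaceQuot

/-- The 2-disk realized as the cone on the circle `ℝ/ℤ`. -/
def ConeS1 : Type :=
  Quot fun p q : AddCircle (1 : ℝ) × I => p.2 = 0 ∧ q.2 = 0

instance : TopologicalSpace ConeS1 := instTopologicalSpaceQuot

/-- The total space of the open book `OB(V, h)` with page the page `P` and monodromy `h`:
the mapping torus of `h` glued to `∂P × D²` along the boundary. -/
def OpenBookSpace (P : Page) (h : P.carrier ≃ₜ P.carrier) : Type :=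
  Quot fun x y : MappingTorus h ⊕ ({ b // b ∈ P.bdry } × ConeS1) =>
    ∃ (b : { b // b ∈ P.bdry }) (t : ℝ),
      x = Sum.inl (Quot.mk _ (b.1, t)) ∧
      y = Sum.inr (b, Quot.mk _ ((t : AddCircle (1 : ℝ)), 1))

instance (P : Page) (h : P.carrier ≃ₜ P.carrier) : TopologicalSpace (OpenBookSpace P h) :=
  instTopologicalSpaceQuot

/-- A proper embedding of pages: a closed topological embedding carrying boundary to
boundary and interior to interior. -/
def ProperPageEmb (P₁ P₂ : Page) (e : P₁.carrier → P₂.carrier) : Prop :=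
  IsClosedEmbedding e ∧ e '' P₁.bdry ⊆ P₂.bdry ∧ e '' P₁.bdryᶜ ⊆ P₂.bdryᶜ

/-- A *spun embedding* (open book embedding) of `OB(P₁, h₁)` in `OB(P₂, h₂)`:
a proper embedding `e` of the page `P₁` in the page `P₂` such that `h₂ ∘ e` is isotopic
(relative to the boundary) to `e ∘ h₁`. -/
def SpunEmbedding (P₁ : Page) (h₁ : P₁.carrier ≃ₜ P₁.carrier)
    (P₂ : Page) (h₂ : P₂.carrier ≃ₜ P₂.carrier) : Prop :=
  ∃ e : P₁.carrier → P₂.carrier, ProperPageEmb P₁ P₂ e ∧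
    ∃ h₂' : P₂.carrier ≃ₜ P₂.carrier, IsotopicRelBdry P₂ h₂ h₂' ∧
      ∀ x, h₂' (e x) = e (h₁ x)

/-- The closed manifold `X` admits a spun embedding (open book embedding) in `Y`:
there are open book structures on `X` and on `Y` and a spun embedding between them. -/
def SpunEmbedsIn (X Y : Type) [TopologicalSpace X] [TopologicalSpace Y] : Prop :=
  ∃ (P₁ : Page) (h₁ : P₁.carrier ≃ₜ P₁.carrier) (P₂ : Page) (h₂ : P₂.carrier ≃ₜ P₂.carrier),
    Nonempty (OpenBookSpace P₁ h₁ ≃ₜ X) ∧ Nonempty (OpenBookSpace P₂ h₂ ≃ₜ Y) ∧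
    SpunEmbedding P₁ h₁ P₂ h₂

/-! ### Compositions and powers of homeomorphisms -/

/-- Iterated composition of a self-homeomorphism. -/
def hIter {X : Type} [TopologicalSpace X] (f : X ≃ₜ X) : ℕ → (X ≃ₜ X)
  | 0 => Homeomorph.refl X
  | (k + 1) => (hIter f k).trans f

/-- Integer powers of a self-homeomorphism. -/
def hPow {X : Type} [TopologicalSpace X] (f : X ≃ₜ X) : ℤ → (X ≃ₜ X)
  | Int.ofNat k => hIter f k
  | Int.negSucc k => (hIter f (k + 1)).symm

/-- The composite `g 0 ∘ g 1 ∘ ⋯ ∘ g (m-1)` of a finite family of self-homeomorphisms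
(in the usual order: `g (m-1)` is applied first). -/
def hComp {X : Type} [TopologicalSpace X] : {m : ℕ} → (Fin m → (X ≃ₜ X)) → (X ≃ₜ X)
  | 0, _ => Homeomorph.refl X
  | (m + 1), g => ((hComp (fun i : Fin m => g i.succ)).trans (g 0))

/-! ### Twist maps along spheres -/

/-- `f` is the twist map of the page `P` along the embedded `n`-sphere `S`, determined by a
trivialized tubular neighborhood `e : Sⁿ × [0,1] ↪ P` of `S = e(Sⁿ × {1/2})`: it is the
model twist `σ_n` in this neighborhood and the identity elsewhere. -/
def IsTwistAlong (n : ℕ) (P : Page) (S : Set P.carrier) (f : P.carrier ≃ₜ P.carrier) : Prop :=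
  ∃ e : (Sph n × I) → P.carrier,
    IsEmbedding e ∧
    IsOpen (e '' {p | (p.2 : ℝ) ≠ 0 ∧ (p.2 : ℝ) ≠ 1}) ∧
    (range e ∩ P.bdry = ∅) ∧
    S = e '' {p | (p.2 : ℝ) = 1 / 2} ∧
    (∀ p, f (e p) = e (sphereTwist n p)) ∧
    (∀ x, x ∉ range e → f x = x)

/-- A Dehn twist of a surface page along the simple closed curve `γ` is a twist map
along a `1`-sphere. -/
def IsDehnTwistAlong (P : Page) (γ : Set P.carrier) (f : P.carrier ≃ₜ P.carrier) : Prop :=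
  IsTwistAlong 1 P γ f

/-! ### Model pages -/

/-- The page `Sⁿ × [0,1]`. -/
def prodIPage (n : ℕ) : Page where
  carrier := Sph n × I
  bdry := {p | p.2 = 0 ∨ p.2 = 1}

/-- The page `S¹ × Dⁿ`. -/
def solidTorusPage (n : ℕ) : Page where
  carrier := Sph 1 × Dsk n
  bdry := {p | ‖p.2.1‖ = 1}

/-- The page `Dⁿ`. -/
def diskPage (n : ℕ) : Page where
  carrier := Dsk n
  bdry := {x | ‖x.1‖ = 1}

/-- A space with empty boundary, regarded as a page. -/
def plainPage (X : Type) [TopologicalSpace X] : Page where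
  carrier := X
  bdry := ∅

/-- Centers for the removed sub-balls. -/
def ctr (m : ℕ) (i : ℕ) : EuclideanSpace ℝ (Fin m) :=
  WithLp.toLp 2 fun k => if (k : ℕ) = 0 then (3 * (i + 1) : ℝ) else 0

/-- The `m`-disk of radius `3k + 3` with `k` disjoint open unit balls removed: a model for
the boundary connected sum of `k` copies of `S^{m-1} × [0,1]`.  For `m = 2` this is the
planar surface `Σ_{0,k+1}`. -/
def holedDisk (m k : ℕ) : Page where
  carrier := {x : EuclideanSpace ℝ (Fin m) //
    ‖x‖ ≤ 3 * k + 3 ∧ ∀ i < k, 1 ≤ ‖x - ctr m i‖}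
  bdry := {x | ‖x.1‖ = 3 * k + 3 ∨ ∃ i < k, ‖x.1 - ctr m i‖ = 1}

/-- The planar surface `Σ_{0,n+1}`: the disk with `n` disjoint open sub-disks removed. -/
def planarPage (n : ℕ) : Page := holedDisk 2 n

/-- The `i`-th inner boundary circle of `Σ_{0,n+1}`. -/
def innerCircle (n : ℕ) (i : ℕ) : Set (planarPage n).carrier :=
  {x | ‖x.1 - ctr 2 i‖ = 1}

/-- The outer boundary circle of `Σ_{0,n+1}`. -/
def outerCircle (n : ℕ) : Set (planarPage n).carrier :=
  {x | ‖x.1‖ = 3 * n + 3}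

/-! ### Manifold predicates (topological) -/

/-- `x` is an interior manifold point of dimension `m`: it has an open neighborhood
homeomorphic to `ℝᵐ`. -/
def IsInteriorPt (m : ℕ) {X : Type} [TopologicalSpace X] (x : X) : Prop :=
  ∃ U : Set X, IsOpen U ∧ x ∈ U ∧ Nonempty (U ≃ₜ EuclideanSpace ℝ (Fin m))

/-- `X` is a (second countable, Hausdorff) topological `m`-manifold, possibly with boundary. -/
def IsMfdWithBdry (m : ℕ) (X : Type) [TopologicalSpace X] : Prop :=
  T2Space X ∧ SecondCountableTopology X ∧
    ∀ x : X, IsInteriorPt m x ∨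
      ∃ U : Set X, IsOpen U ∧ x ∈ U ∧
        Nonempty (U ≃ₜ {y : ℝ × EuclideanSpace ℝ (Fin (m - 1)) // 0 ≤ y.1})

/-- The page `P` is a compact topological `m`-manifold whose designated boundary set is
exactly the set of non-interior points. -/
def IsCompactMfdPage (m : ℕ) (P : Page) : Prop :=
  CompactSpace P.carrier ∧ IsMfdWithBdry m P.carrier ∧
    P.bdry = {x : P.carrier | ¬ IsInteriorPt m x}

/-- `X` is a closed (compact, boundaryless) topological `m`-manifold. -/
def IsClosedMfd (m : ℕ) (X : Type) [TopologicalSpace X] : Prop :=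
  CompactSpace X ∧ IsMfdWithBdry m X ∧ ∀ x : X, IsInteriorPt m x

/-! ### Connected sums -/

/-- `Z` is a connected sum of `X` and `Y` (`m` = dimension): `Z` is covered by two closed
pieces, homeomorphic to the complements of open balls embedded in `X` resp. `Y`, glued
along the boundary spheres by matching parametrizations. -/
def IsConnSumOf (m : ℕ) (Z X Y : TopCat) : Prop :=
  ∃ (A B : Set Z) (eX : Dsk m → X) (eY : Dsk m → Y),
    IsEmbedding eX ∧ IsEmbedding eY ∧
    IsOpen (eX '' {z | ‖z.1‖ < 1}) ∧ IsOpen (eY '' {z | ‖z.1‖ < 1}) ∧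
    IsClosed A ∧ IsClosed B ∧ A ∪ B = univ ∧
    ∃ (fA : A ≃ₜ {x : X // x ∉ eX '' {z | ‖z.1‖ < 1}})
      (fB : B ≃ₜ {y : Y // y ∉ eY '' {z | ‖z.1‖ < 1}}),
      (∀ p (hA : p ∈ A), ((fA ⟨p, hA⟩).1 ∈ eX '' {z | ‖z.1‖ = 1}) ↔ p ∈ B) ∧
      (∀ p (hB : p ∈ B), ((fB ⟨p, hB⟩).1 ∈ eY '' {z | ‖z.1‖ = 1}) ↔ p ∈ A) ∧
      (∀ p (hA : p ∈ A) (hB : p ∈ B), ∃ z : Dsk m, ‖z.1‖ = 1 ∧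
        (fA ⟨p, hA⟩).1 = eX z ∧ (fB ⟨p, hB⟩).1 = eY z)

/-- `IsConnSumMulti m l Z`: `Z` is a connected sum of the (nonempty) list `l` of closed
`m`-manifolds. -/
inductive IsConnSumMulti (m : ℕ) : List TopCat → TopCat → Prop
  | nil (Z : TopCat) : Nonempty (Z ≃ₜ Sph m) → IsConnSumMulti m [] Z
  | single (X Z : TopCat) : Nonempty (Z ≃ₜ X) → IsConnSumMulti m [X] Z
  | cons (X : TopCat) (l : List TopCat) (Y Z : TopCat) :
      IsConnSumMulti m l Y → IsConnSumOf m Z X Y → IsConnSumMulti m (X :: l) Z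

/-- An isomorphism of pages: a homeomorphism carrying boundary onto boundary. -/
def PageIso (P Q : Page) : Prop :=
  ∃ f : P.carrier ≃ₜ Q.carrier, f '' P.bdry = Q.bdry

/-- `P` is a boundary connected sum of the pages `P₁` and `P₂` (`m` = dimension):
`P` is covered by closed pieces homeomorphic to `P₁` and `P₂` meeting in a `(m-1)`-disk
lying in the boundaries of both pieces. -/
def IsBdryConnSum (m : ℕ) (P P₁ P₂ : Page) : Prop :=
  ∃ (A B : Set P.carrier), IsClosed A ∧ IsClosed B ∧ A ∪ B = univ ∧
    ∃ (fA : A ≃ₜ P₁.carrier) (fB : B ≃ₜ P₂.carrier) (g : ↥(A ∩ B) ≃ₜ Dsk (m - 1)),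
      (∀ p (hA : p ∈ A) (hB : p ∈ B),
        fA ⟨p, hA⟩ ∈ P₁.bdry ∧ fB ⟨p, hB⟩ ∈ P₂.bdry) ∧
      P.bdry = {p | (∃ hA : p ∈ A, fA ⟨p, hA⟩ ∈ P₁.bdry) ∨
                    (∃ hB : p ∈ B, fB ⟨p, hB⟩ ∈ P₂.bdry)} \
               {p | ∃ h : p ∈ A ∩ B, ‖(g ⟨p, h⟩).1‖ < 1}

/-- `P` is a boundary connected sum of `k` copies of the page `Q`. -/
inductive IsIterBdryConnSum (m : ℕ) (Q : Page) : ℕ → Page → Prop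
  | single (P : Page) : PageIso P Q → IsIterBdryConnSum m Q 1 P
  | cons (k : ℕ) (P P' : Page) : IsIterBdryConnSum m Q k P' →
      IsBdryConnSum m P P' Q → IsIterBdryConnSum m Q (k + 1) P

/-! ### Some standard closed manifolds -/

/-- `S² × Sⁿ`, the trivial `Sⁿ`-bundle over `S²`. -/
def trivSphBundle (n : ℕ) : TopCat := TopCat.of (Sph 2 × Sph n)

/-- The rotation of `Sⁿ` (in the first two coordinates of `ℝ^{n+1}`) by the angle `θ`;
for `n ≥ 1` the loop `θ ∈ [0, 2π]` of such rotations generates `π₁(SO(n+1))`. -/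
def rotSph (n : ℕ) (θ : ℝ) (s : Sph n) : Sph n :=
  if h : 1 ≤ n then
    ⟨rotIn ⟨0, by omega⟩ ⟨1, by omega⟩ (cos θ) (sin θ) s.1,
      by rw [rotIn_norm (by simp [Fin.ext_iff]) (cos_sq_add_sin_sq _)]; exact s.2⟩
  else s

/-- The twisted (nontrivial) `Sⁿ`-bundle over `S²`, `S²×̃Sⁿ`: two copies of `D² × Sⁿ`
glued along `∂D² × Sⁿ` by the clutching map which rotates the fiber `Sⁿ` by the
angle of the boundary point of `D²`. -/
def TwistedSphBundleSpace (n : ℕ) : Type :=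
  Quot fun x y : (Dsk 2 × Sph n) ⊕ (Dsk 2 × Sph n) =>
    ∃ (z : Dsk 2) (θ : ℝ) (s : Sph n),
      z.1 0 = cos θ ∧ z.1 1 = sin θ ∧
      x = Sum.inl (z, s) ∧ y = Sum.inr (z, rotSph n θ s)

instance (n : ℕ) : TopologicalSpace (TwistedSphBundleSpace n) := instTopologicalSpaceQuot

/-- `S²×̃Sⁿ` as a bundled space. -/
def twistedSphBundle (n : ℕ) : TopCat := TopCat.of (TwistedSphBundleSpace n)

/-- The lens space `L(p,q)` (the quotient of `S³ ⊆ ℂ²` by `(z₁, z₂) ↦ (ζ z₁, ζ^q z₂)`,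
`ζ = e^{2πi/p}`; equivalently, up to orientation, the result of `-p/q` surgery on the
unknot in `S³`). -/
def LensSpace (p q : ℕ) : Type :=
  Quot fun x y : Sph 3 =>
    y.1 = rotIn 0 1 (cos (2 * π / p)) (sin (2 * π / p))
      (rotIn 2 3 (cos (2 * π * q / p)) (sin (2 * π * q / p)) x.1)

instance (p q : ℕ) : TopologicalSpace (LensSpace p q) := instTopologicalSpaceQuot

/-- The Poincaré homology sphere `Σ(2,3,5)`, as the Brieskorn sphere
`{z₁² + z₂³ + z₃⁵ = 0} ∩ S⁵ ⊆ ℂ³`. -/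
abbrev PoincareSphere : Type :=
  {z : EuclideanSpace ℂ (Fin 3) // z 0 ^ 2 + z 1 ^ 3 + z 2 ^ 5 = 0 ∧ ‖z‖ = 1}

/-- The double `D(M) = M ∪_∂ M` of a page. -/
def PageDouble (P : Page) : Type :=
  Quot fun x y : P.carrier ⊕ P.carrier =>
    ∃ b ∈ P.bdry, x = Sum.inl b ∧ y = Sum.inr b

instance (P : Page) : TopologicalSpace (PageDouble P) := instTopologicalSpaceQuot

/-! ### Loops, free homotopy, push maps -/

/-- Two loops `γ₁, γ₂ : [0,1] → X` (with matching endpoints) are freely homotopic. -/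
def FreelyHomotopic {X : Type} [TopologicalSpace X] (γ₁ γ₂ : C(I, X)) : Prop :=
  ∃ H : C(I × I, X), (∀ t, H (0, t) = γ₁ t) ∧ (∀ t, H (1, t) = γ₂ t) ∧
    ∀ s, H (s, 0) = H (s, 1)

/-- The trace loop of a point under an ambient isotopy. -/
def traceLoop {X : Type} [TopologicalSpace X] (H : C(I × X, X)) (x : X) : C(I, X) :=
  ⟨fun t => H (t, x), H.continuous.comp (continuous_id.prodMk continuous_const)⟩

/-- `f` is a push map of the page `P`, pushing the boundary sphere component `S` once
around the loop `γ`: `f` is the end of an ambient isotopy of `P` starting at the identity,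
fixing all of the boundary except `S`, under which the points of `S` travel along loops
freely homotopic to `γ`; the final homeomorphism `f` is the identity near all of the
boundary. -/
def IsPushMap (P : Page) (S : Set P.carrier) (γ : C(I, P.carrier))
    (f : P.carrier ≃ₜ P.carrier) : Prop :=
  IdNearBdry P f ∧
  ∃ H : C(I × P.carrier, P.carrier),
    (∀ t, ∃ ht : P.carrier ≃ₜ P.carrier, ∀ x, H (t, x) = ht x) ∧
    (∀ x, H (0, x) = x) ∧ (∀ x, H (1, x) = f x) ∧
    (∀ t, ∀ x ∈ P.bdry \ S, H (t, x) = x) ∧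
    (∀ s ∈ S, FreelyHomotopic (traceLoop H s) γ)

/-- `γ` is a boundary-parallel embedded `n`-sphere in the page `P`, parallel to the
boundary component `C`: there is an embedded collar `Sⁿ × [0,1]` with one end equal to
`C` and the other end equal to `γ`, meeting the boundary only in `C`. -/
def IsBdryParallelSphere (n : ℕ) (P : Page) (C γ : Set P.carrier) : Prop :=
  ∃ A : (Sph n × I) → P.carrier, IsEmbedding A ∧
    A '' {p | p.2 = 0} = C ∧ A '' {p | p.2 = 1} = γ ∧
    (A '' {p | p.2 ≠ 0}) ∩ P.bdry = ∅

/-- A point of the plane is enclosed by the compact set `K` if it lies in a bounded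
component of the complement of `K`.  (For a simple closed curve `K = γ`, this says the
point is inside `γ`; it records the mod 2 winding number of `γ` around the point.) -/
def Enclosed (K : Set (EuclideanSpace ℝ (Fin 2))) (p : EuclideanSpace ℝ (Fin 2)) : Prop :=
  p ∉ K ∧ Bornology.IsBounded (connectedComponentIn Kᶜ p)

/-- The base point `(1,0)` of the circle. -/
def basePt2 : Sph 1 :=
  ⟨WithLp.toLp 2 fun k => if (k : ℕ) = 0 then 1 else 0, by
    rw [EuclideanSpace.norm_eq]
    have : ∀ k : Fin 2, ‖(fun k : Fin 2 => if (k : ℕ) = 0 then (1:ℝ) else 0) k‖ ^ 2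
        = if (k : ℕ) = 0 then 1 else 0 := by
      intro k; by_cases h : (k : ℕ) = 0 <;> simp [h]
    rw [Finset.sum_congr rfl (fun k _ => this k), Fin.sum_univ_two]
    norm_num⟩

/-- The point on the unit circle at angle `2πθ`. -/
def circPt (θ : ℝ) : Sph 1 :=
  ⟨rotIn 0 1 (cos (2 * π * θ)) (sin (2 * π * θ)) basePt2.1, by
    rw [rotIn_norm fin01_ne (cos_sq_add_sin_sq _)]; exact basePt2.2⟩

lemma circPt_continuous : Continuous circPt := by
  have h1 : Continuous fun θ : ℝ => cos (2 * π * θ) := by fun_prop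
  have h2 : Continuous fun θ : ℝ => sin (2 * π * θ) := by fun_prop
  have h : Continuous fun θ : ℝ =>
      rotIn (0 : Fin 2) 1 (cos (2 * π * θ)) (sin (2 * π * θ)) basePt2.1 :=
    (rotIn_continuous 0 1).comp (h1.prodMk (h2.prodMk continuous_const))
  exact h.subtype_mk _

/-- The center of the disk. -/
def zeroDsk (n : ℕ) : Dsk n := ⟨0, by simp⟩

/-- A group is finitely presented. -/
def Group.IsFinitelyPresented' (G : Type) [Group G] : Prop :=
  ∃ (n : ℕ) (rels : Set (FreeGroup (Fin n))), rels.Finite ∧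
    Nonempty (G ≃* PresentedGroup rels)

/-- The equatorial inclusion `Sⁿ ↪ S^{n+1}` (appending a last coordinate `0`). -/
def equatorIncl (n : ℕ) (x : Sph n) : Sph (n + 1) :=
  ⟨WithLp.toLp 2 fun k => if h : (k : ℕ) < n + 1 then x.1 ⟨k, h⟩ else 0, by
    rw [EuclideanSpace.norm_eq]
    have hs : ∑ k : Fin (n + 2),
        ‖(fun k : Fin (n + 2) => if h : (k : ℕ) < n + 1 then x.1 ⟨k, h⟩ else 0) k‖ ^ 2
        = ∑ k : Fin (n + 1), ‖x.1 k‖ ^ 2 := by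
      rw [Fin.sum_univ_castSucc]
      beta_reduce
      have hlast : ¬ (((Fin.last (n + 1)) : ℕ) < n + 1) := by simp
      rw [dif_neg hlast]
      have h1 : ∀ k : Fin (n + 1),
          ‖(if h : ((k.castSucc : Fin (n + 2)) : ℕ) < n + 1 then
              x.1 ⟨((k.castSucc : Fin (n + 2)) : ℕ), h⟩ else 0)‖ ^ 2
          = ‖x.1 k‖ ^ 2 := by
        intro k
        rw [dif_pos (by simp [Fin.is_le])]
        congr 1
      rw [Finset.sum_congr rfl fun k _ => h1 k]
      simp
    rw [hs, ← EuclideanSpace.norm_eq, x.2]⟩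

/-- The induced equatorial page embedding `Sⁿ × [0,1] ↪ S^{n+1} × [0,1]`. -/
def equatorPageEmb (n : ℕ) (p : Sph n × I) : Sph (n + 1) × I := (equatorIncl n p.1, p.2)

/-! ### Auxiliary lemmas for Statement 9 -/

instance sphCompact (n : ℕ) : CompactSpace (Sph n) := by
  have h : IsCompact {x : EuclideanSpace ℝ (Fin (n + 1)) | ‖x‖ = 1} := by
    have he : {x : EuclideanSpace ℝ (Fin (n + 1)) | ‖x‖ = 1} = Metric.sphere 0 1 := by
      ext x; simp [mem_sphere_iff_norm]
    rw [he]; exact isCompact_sphere 0 1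
  exact isCompact_iff_compactSpace.mp h

lemma equatorIncl_continuous (n : ℕ) : Continuous (equatorIncl n) := by
  apply Continuous.subtype_mk
  apply (PiLp.continuous_toLp 2 _).comp
  apply continuous_pi
  intro k
  by_cases h : (k : ℕ) < n + 1
  · simp only [equatorIncl, dif_pos h]
    exact (continuous_apply _).comp ((PiLp.continuous_ofLp 2 _).comp continuous_subtype_val)
  · simp only [equatorIncl, dif_neg h]
    exact continuous_const

lemma equatorIncl_injective (n : ℕ) : Function.Injective (equatorIncl n) := by
  intro x y hxy
  apply Subtype.ext
  refine PiLp.ext fun k => ?_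
  have h := congrArg (fun z : Sph (n + 1) => z.1 (Fin.castSucc k)) hxy
  simp only [equatorIncl, WithLp.ofLp_toLp] at h
  have hk : ((Fin.castSucc k : Fin (n + 2)) : ℕ) < n + 1 := by simp [Fin.is_le]
  rw [dif_pos hk, dif_pos hk] at h
  have he : (⟨((Fin.castSucc k : Fin (n + 2)) : ℕ), hk⟩ : Fin (n + 1)) = k := by
    apply Fin.ext; simp
  rwa [he] at h

lemma rotIn_one_zero {m : ℕ} {i j : Fin m} (hij : i ≠ j) (x : EuclideanSpace ℝ (Fin m)) :
    rotIn i j 1 0 x = x := by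
  refine PiLp.ext fun k => ?_
  by_cases hki : k = i
  · subst hki; rw [rotIn_apply_i]; ring
  · by_cases hkj : k = j
    · subst hkj; rw [rotIn_apply_j hij]; ring
    · rw [rotIn_apply_ne _ _ _ hki hkj]

lemma sphereTwist_fixBdry (n : ℕ) (p : Sph n × I) (hp : p.2 = 0 ∨ p.2 = 1) :
    sphereTwist n p = p := by
  cases n with
  | zero => rfl
  | succ m =>
    have hcs : cos (twAng p.2) = 1 ∧ sin (twAng p.2) = 0 := by
      rcases hp with h | h
      · have : twAng p.2 = 0 := by rw [h]; norm_num [twAng, bump]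
        rw [this]; exact ⟨Real.cos_zero, Real.sin_zero⟩
      · have : twAng p.2 = 2 * π := by
          rw [h]; unfold twAng bump; norm_num
        rw [this]; exact ⟨Real.cos_two_pi, Real.sin_two_pi⟩
    show sphereTwistCore m p = p
    refine Prod.ext (Subtype.ext ?_) rfl
    show rotIn 0 1 (cos (twAng p.2)) (sin (twAng p.2)) p.1.1 = p.1.1
    rw [hcs.1, hcs.2, rotIn_one_zero fin01_ne]

lemma hIter_fixBdry (n : ℕ) (i : ℕ) (p : Sph n × I) (hp : p.2 = 0 ∨ p.2 = 1) :
    hIter (sphereTwist n) i p = p := by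
  induction i with
  | zero => rfl
  | succ k ih =>
    show sphereTwist n (hIter (sphereTwist n) k p) = p
    rw [ih, sphereTwist_fixBdry n p hp]

lemma rotIn_equator (n : ℕ) (hn : 1 ≤ n) (a b : ℝ) (x : EuclideanSpace ℝ (Fin (n + 1)))
    (k : Fin (n + 2)) :
    rotIn (0 : Fin (n + 2)) 1 a b (WithLp.toLp 2 fun j => if h : (j : ℕ) < n + 1 then x ⟨j, h⟩ else 0) k
      = if h : (k : ℕ) < n + 1 then rotIn (0 : Fin (n + 1)) 1 a b x ⟨k, h⟩ else 0 := by
  have h0big : ((0 : Fin (n + 2)) : ℕ) = 0 := rfl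
  have h1big : ((1 : Fin (n + 2)) : ℕ) = 1 := by
    rw [Fin.val_one']; exact Nat.mod_eq_of_lt (by omega)
  have h0sm : ((0 : Fin (n + 1)) : ℕ) = 0 := rfl
  have h1sm : ((1 : Fin (n + 1)) : ℕ) = 1 := by
    rw [Fin.val_one']; exact Nat.mod_eq_of_lt (by omega)
  have hne_sm : (0 : Fin (n + 1)) ≠ 1 := by
    intro h; rw [Fin.ext_iff, h0sm, h1sm] at h; omega
  have hne_big : (0 : Fin (n + 2)) ≠ 1 := by
    intro h; rw [Fin.ext_iff, h0big, h1big] at h; omega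
  have hlt0 : ((0 : Fin (n + 2)) : ℕ) < n + 1 := by rw [h0big]; omega
  have hlt1 : ((1 : Fin (n + 2)) : ℕ) < n + 1 := by rw [h1big]; omega
  have he0 : (⟨((0 : Fin (n + 2)) : ℕ), hlt0⟩ : Fin (n + 1)) = 0 := by
    apply Fin.ext
    show ((0 : Fin (n + 2)) : ℕ) = ((0 : Fin (n + 1)) : ℕ)
    rw [h0big, h0sm]
  have he1 : (⟨((1 : Fin (n + 2)) : ℕ), hlt1⟩ : Fin (n + 1)) = 1 := by
    apply Fin.ext
    show ((1 : Fin (n + 2)) : ℕ) = ((1 : Fin (n + 1)) : ℕ)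
    rw [h1big, h1sm]
  have hE0 : (if h : ((0 : Fin (n + 2)) : ℕ) < n + 1
      then x ⟨((0 : Fin (n + 2)) : ℕ), h⟩ else 0) = x 0 := by
    rw [dif_pos hlt0, he0]
  have hE1 : (if h : ((1 : Fin (n + 2)) : ℕ) < n + 1
      then x ⟨((1 : Fin (n + 2)) : ℕ), h⟩ else 0) = x 1 := by
    rw [dif_pos hlt1, he1]
  by_cases hk0 : (k : ℕ) = 0
  · have hk : k = (0 : Fin (n + 2)) := by apply Fin.ext; rw [h0big]; exact hk0
    subst hk
    rw [rotIn_apply_i, WithLp.ofLp_toLp]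
    beta_reduce
    rw [hE0, hE1, dif_pos hlt0, he0, rotIn_apply_i]
  · by_cases hk1 : (k : ℕ) = 1
    · have hk : k = (1 : Fin (n + 2)) := by apply Fin.ext; rw [h1big]; exact hk1
      subst hk
      rw [rotIn_apply_j hne_big, WithLp.ofLp_toLp]
      beta_reduce
      rw [hE0, hE1, dif_pos hlt1, he1, rotIn_apply_j hne_sm]
    · have hki : k ≠ (0 : Fin (n + 2)) := by
        intro h; rw [Fin.ext_iff, h0big] at h; exact hk0 h
      have hkj : k ≠ (1 : Fin (n + 2)) := by
        intro h; rw [Fin.ext_iff, h1big] at h; exact hk1 h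
      rw [rotIn_apply_ne _ _ _ hki hkj, WithLp.ofLp_toLp]
      beta_reduce
      by_cases hlt : (k : ℕ) < n + 1
      · rw [dif_pos hlt, dif_pos hlt]
        have hi : (⟨(k : ℕ), hlt⟩ : Fin (n + 1)) ≠ 0 := by
          intro h; rw [Fin.ext_iff] at h; rw [h0sm] at h; exact hk0 h
        have hj : (⟨(k : ℕ), hlt⟩ : Fin (n + 1)) ≠ 1 := by
          intro h; rw [Fin.ext_iff] at h; rw [h1sm] at h; exact hk1 h
        rw [rotIn_apply_ne _ _ _ hi hj]
      · rw [dif_neg hlt, dif_neg hlt]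

lemma sphereTwist_equator (n : ℕ) (hn : 1 ≤ n) (p : Sph n × I) :
    sphereTwist (n + 1) (equatorPageEmb n p) = equatorPageEmb n (sphereTwist n p) := by
  obtain ⟨m, rfl⟩ : ∃ m, n = m + 1 := ⟨n - 1, by omega⟩
  show sphereTwistCore (m + 1) (equatorPageEmb (m + 1) p)
      = equatorPageEmb (m + 1) (sphereTwistCore m p)
  refine Prod.ext (Subtype.ext (PiLp.ext fun k => ?_)) rfl
  exact rotIn_equator (m + 1) (by omega) (cos (twAng p.2)) (sin (twAng p.2)) p.1.1 k

lemma hIter_equator (n : ℕ) (hn : 1 ≤ n) (i : ℕ) (p : Sph n × I) :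
    hIter (sphereTwist (n + 1)) i (equatorPageEmb n p)
      = equatorPageEmb n (hIter (sphereTwist n) i p) := by
  induction i with
  | zero => rfl
  | succ k ih =>
    show sphereTwist (n + 1) (hIter (sphereTwist (n + 1)) k (equatorPageEmb n p))
        = equatorPageEmb n (sphereTwist n (hIter (sphereTwist n) k p))
    rw [ih, sphereTwist_equator n hn]

/-- For `n ≥ 1` and every integer `i ≥ 0`, the open book
`OB(Sⁿ×[0,1], σ_n^i)` admits a spun embedding in `OB(S^{n+1}×[0,1], σ_{n+1}^i)` induced by
the equatorial embedding of `Sⁿ` in `S^{n+1}`: the equatorial page embedding is a proper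
embedding of pages intertwining `σ_n^i` with a homeomorphism isotopic to `σ_{n+1}^i`
relative to the boundary. -/
theorem spunEmbedding_sphereTwist_equator (n : ℕ) (hn : 1 ≤ n) (i : ℕ) :
    ProperPageEmb (prodIPage n) (prodIPage (n + 1)) (equatorPageEmb n) ∧
    (∃ h₂' : (Sph (n + 1) × I) ≃ₜ (Sph (n + 1) × I),
      IsotopicRelBdry (prodIPage (n + 1)) (hIter (sphereTwist (n + 1)) i) h₂' ∧
      ∀ p, h₂' (equatorPageEmb n p) = equatorPageEmb n (hIter (sphereTwist n) i p)) ∧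
    SpunEmbedding (prodIPage n) (hIter (sphereTwist n) i)
      (prodIPage (n + 1)) (hIter (sphereTwist (n + 1)) i) := by
  have hcont : Continuous (equatorPageEmb n) :=
    ((equatorIncl_continuous n).comp continuous_fst).prodMk continuous_snd
  have hinj : Function.Injective (equatorPageEmb n) := by
    intro p q h
    have h1 := congrArg Prod.fst h
    have h2 := congrArg Prod.snd h
    exact Prod.ext (equatorIncl_injective n h1) h2
  have hprop : ProperPageEmb (prodIPage n) (prodIPage (n + 1)) (equatorPageEmb n) := by
    refine ⟨hcont.isClosedEmbedding hinj, ?_, ?_⟩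
    · rintro _ ⟨p, hp, rfl⟩
      exact hp
    · rintro _ ⟨p, hp, rfl⟩
      exact hp
  have hfix : ∀ x ∈ (prodIPage (n + 1)).bdry, hIter (sphereTwist (n + 1)) i x = x :=
    fun x hx => hIter_fixBdry (n + 1) i x hx
  have hiso : IsotopicRelBdry (prodIPage (n + 1)) (hIter (sphereTwist (n + 1)) i)
      (hIter (sphereTwist (n + 1)) i) := by
    refine ⟨⟨fun q => hIter (sphereTwist (n + 1)) i q.2,
      (Homeomorph.continuous _).comp continuous_snd⟩,
      fun t => ⟨hIter (sphereTwist (n + 1)) i, fun x => rfl⟩,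
      fun x => rfl, fun x => rfl, fun t x hx => hfix x hx⟩
  have hcomm : ∀ p, hIter (sphereTwist (n + 1)) i (equatorPageEmb n p)
      = equatorPageEmb n (hIter (sphereTwist n) i p) :=
    fun p => hIter_equator n hn i p
  exact ⟨hprop, ⟨hIter (sphereTwist (n + 1)) i, hiso, hcomm⟩,
    ⟨equatorPageEmb n, hprop, hIter (sphereTwist (n + 1)) i, hiso, hcomm⟩⟩
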